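/- arXiv:1204.0471 — 7 statements merged into one kernel-verified Lean document; each statement's English description precedes it below -/
import Mathlib

section
/- Let B ⊆ ℝ^d be a compact set. Then there exists a finite set X ⊆ B with |X| ≤ 1 + d(d+1)/2 such that for every linear function ℓ: ℝ^d → ℝ, max_{x∈B} |ℓ(x)| ≤ √d · max_{x∈X} |ℓ(x)|. -/
/-!
A D-optimal design argument (Kiefer–Wolfowitz). Maximize `det (ε • 1 + M)` over the convex hull
`K` of the rank-one matrices `x xᵀ`, `x ∈ B`. At the maximizer `A`, moving towards any `x xᵀ` does
not increase the determinant; to first order this says `xᵀ A⁻¹ x ≤ d`, and Cauchy–Schwarz for the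
inner product defined by `A` turns it into `(c ⬝ x)² ≤ d · cᵀ A c`. Letting `ε → 0` (`K` is
compact) gives `M ∈ K` with `(c ⬝ x)² ≤ d · cᵀ M c`. The matrices in `K` are symmetric, so by
Carathéodory `M` is a convex combination of at most `1 + d(d+1)/2` matrices `x xᵀ`; these `x` form
`X`, and `cᵀ M c ≤ max_{y ∈ X} (c ⬝ y)²`.
-/

open Matrix Set Filter Topology

section CompactConvexHull

variable {E : Type*} [AddCommGroup E] [Module ℝ E] [FiniteDimensional ℝ E]

theorem convexHull_eq_biUnion_image_stdSimplex (s : Set E) :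
    convexHull ℝ s = ⋃ k ∈ Finset.range (Module.finrank ℝ E + 2),
      (fun p : (Fin k → ℝ) × (Fin k → E) => ∑ i, p.1 i • p.2 i) ''
        (stdSimplex ℝ (Fin k) ×ˢ univ.pi fun _ => s) := by
  refine Subset.antisymm (fun x hx => ?_) ?_
  · obtain ⟨ι, _, z, w, hzs, hz, hw₀, hw₁, rfl⟩ := eq_pos_convex_span_of_mem_convexHull hx
    have hcard : Fintype.card ι < Module.finrank ℝ E + 2 :=
      Nat.lt_succ_of_le <| hz.card_le_finrank_succ.trans <|
        Nat.succ_le_succ (Submodule.finrank_le _)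
    let e := Fintype.equivFin ι
    refine mem_biUnion (Finset.mem_range.2 hcard) ⟨(w ∘ e.symm, z ∘ e.symm), ⟨⟨?_, ?_⟩, ?_⟩, ?_⟩
    · exact fun i => (hw₀ _).le
    · simpa [Function.comp_def, e.symm.sum_comp] using hw₁
    · exact fun i _ => hzs ⟨_, rfl⟩
    · exact e.symm.sum_comp fun j => w j • z j
  · refine iUnion₂_subset fun k _ => ?_
    rintro _ ⟨⟨w, z⟩, ⟨hw, hz⟩, rfl⟩
    exact mem_convexHull_of_exists_fintype w z hw.1 hw.2 (fun i => hz i (mem_univ i)) rfl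

variable [TopologicalSpace E] [ContinuousAdd E] [ContinuousSMul ℝ E]

theorem IsCompact.convexHull {s : Set E} (hs : IsCompact s) : IsCompact (convexHull ℝ s) := by
  rw [convexHull_eq_biUnion_image_stdSimplex]
  refine (Finset.range _).isCompact_biUnion fun k _ => ?_
  exact ((isCompact_stdSimplex ℝ _).prod (isCompact_univ_pi fun _ => hs)).image (by fun_prop)

end CompactConvexHull

theorem exists_finset_card_le_finrank_succ_of_mem_convexHull {𝕜 E : Type*} [Field 𝕜]
    [LinearOrder 𝕜] [IsStrictOrderedRing 𝕜] [AddCommGroup E] [Module 𝕜 E]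
    {p : Submodule 𝕜 E} [FiniteDimensional 𝕜 p] {s : Set E} (hs : s ⊆ p) {x : E}
    (hx : x ∈ convexHull 𝕜 s) :
    ∃ t : Finset E, ↑t ⊆ s ∧ t.card ≤ Module.finrank 𝕜 p + 1 ∧ x ∈ convexHull 𝕜 (t : Set E) := by
  rw [convexHull_eq_union] at hx
  simp only [mem_iUnion] at hx
  obtain ⟨t, hts, hai, hxt⟩ := hx
  refine ⟨t, hts, ?_, hxt⟩
  have hspan : vectorSpan 𝕜 (range ((↑) : t → E)) ≤ p := by
    rw [vectorSpan_def, Submodule.span_le]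
    rintro _ ⟨_, ⟨a, rfl⟩, _, ⟨b, rfl⟩, rfl⟩
    exact p.sub_mem (hs (hts a.2)) (hs (hts b.2))
  simpa using hai.card_le_finrank_succ.trans (Nat.succ_le_succ (Submodule.finrank_mono hspan))

theorem Matrix.convex_setOf_posSemidef {n : Type*} :
    Convex ℝ {A : Matrix n n ℝ | A.PosSemidef} :=
  fun _ hA _ hB _ _ ha hb _ => (hA.smul ha).add (hB.smul hb)

namespace Matrix

variable {n : Type*}

-- One entry per unordered pair `{i, j}`: the range, which contains every symmetric matrix, has
-- dimension at most `#(Sym2 n) = n(n+1)/2`.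
def ofSym2 : (Sym2 n → ℝ) →ₗ[ℝ] Matrix n n ℝ where
  toFun w := of fun i j => w s(i, j)
  map_add' _ _ := rfl
  map_smul' _ _ := rfl

theorem vecMulVec_self_mem_range_ofSym2 (x : n → ℝ) :
    vecMulVec x x ∈ LinearMap.range (ofSym2 (n := n)) :=
  ⟨Sym2.lift ⟨fun i j => x i * x j, fun _ _ => mul_comm _ _⟩, by ext; rfl⟩

variable [Fintype n]

theorem dotProduct_vecMulVec_self_mulVec (x c : n → ℝ) :
    c ⬝ᵥ vecMulVec x x *ᵥ c = (c ⬝ᵥ x) ^ 2 := by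
  simp [vecMulVec_mulVec, dotProduct_comm, sq]

theorem isLinearMap_dotProduct_mulVec (c : n → ℝ) :
    IsLinearMap ℝ fun M : Matrix n n ℝ => c ⬝ᵥ M *ᵥ c :=
  ⟨fun M N => by simp [add_mulVec], fun r M => by simp [smul_mulVec]⟩

theorem posSemidef_of_mem_convexHull_vecMulVec_self {B : Set (n → ℝ)} {M : Matrix n n ℝ}
    (hM : M ∈ convexHull ℝ ((fun x => vecMulVec x x) '' B)) : M.PosSemidef :=
  convexHull_min (image_subset_iff.2 fun x _ => by simpa using posSemidef_vecMulVec_self_star x)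
    convex_setOf_posSemidef hM

theorem dotProduct_mulVec_le_of_mem_convexHull_vecMulVec_self {B : Set (n → ℝ)}
    {M : Matrix n n ℝ} (hM : M ∈ convexHull ℝ ((fun x => vecMulVec x x) '' B)) {c : n → ℝ}
    {r : ℝ} (h : ∀ y ∈ B, (c ⬝ᵥ y) ^ 2 ≤ r) : c ⬝ᵥ M *ᵥ c ≤ r := by
  refine convexHull_min (image_subset_iff.2 fun y hy => ?_)
    (convex_halfSpace_le (isLinearMap_dotProduct_mulVec c) r) hM
  simpa [dotProduct_vecMulVec_self_mulVec] using h y hy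

section DecidableEq

variable [DecidableEq n]

theorem trace_nonpos_of_det_one_add_smul_le_one {Y : Matrix n n ℝ}
    (h : ∀ t ∈ Ioc (0 : ℝ) 1, det (1 + t • Y) ≤ 1) : trace Y ≤ 0 := by
  -- `det (1 + t • Y) = 1 + trace Y * t + q.eval t * t ^ 2`
  set q := (det (1 + (Polynomial.X : Polynomial ℝ) • Y.map Polynomial.C)).divX.divX
  have hbound : ∀ t ∈ Ioc (0 : ℝ) 1, trace Y ≤ -q.eval t * t := by
    intro t ht
    have := h t ht
    rw [det_one_add_smul] at this
    have : trace Y * t ≤ (-q.eval t * t) * t := by nlinarith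
    exact le_of_mul_le_mul_right this ht.1
  have hlim : Tendsto (fun t => -q.eval t * t) (𝓝[>] 0) (𝓝 0) := by
    have : Continuous fun t => -q.eval t * t := by fun_prop
    simpa using (this.tendsto 0).mono_left nhdsWithin_le_nhds
  refine ge_of_tendsto hlim ?_
  filter_upwards [Ioc_mem_nhdsGT zero_lt_one] with t ht using hbound t ht

theorem trace_inv_mul_le_card_of_isMaxOn_det {S : Set (Matrix n n ℝ)} (hS : Convex ℝ S)
    {A M : Matrix n n ℝ} (hA : A ∈ S) (hdet : 0 < A.det) (hmax : IsMaxOn det S A) (hM : M ∈ S) :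
    trace (A⁻¹ * M) ≤ Fintype.card n := by
  have hA_unit : IsUnit A.det := hdet.ne'.isUnit
  have hY : trace (A⁻¹ * (M - A)) ≤ 0 := by
    refine trace_nonpos_of_det_one_add_smul_le_one fun t ht => ?_
    have hfactor : A + t • (M - A) = A * (1 + t • (A⁻¹ * (M - A))) := by
      rw [Matrix.mul_add, Matrix.mul_one, Matrix.mul_smul, ← Matrix.mul_assoc,
        mul_nonsing_inv _ hA_unit, Matrix.one_mul]
    have hle : det (A + t • (M - A)) ≤ det A := hmax (hS.add_smul_sub_mem hA hM ⟨ht.1.le, ht.2⟩)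
    rw [hfactor, det_mul] at hle
    exact (mul_le_iff_le_one_right hdet).1 hle
  rwa [Matrix.mul_sub, trace_sub, nonsing_inv_mul _ hA_unit, trace_one, sub_nonpos] at hY

theorem PosDef.sq_dotProduct_le {A : Matrix n n ℝ} (hA : A.PosDef) (c x : n → ℝ) :
    (c ⬝ᵥ x) ^ 2 ≤ (x ⬝ᵥ A⁻¹ *ᵥ x) * (c ⬝ᵥ A *ᵥ c) := by
  -- Cauchy–Schwarz for `⟪u, v⟫ = (A *ᵥ v) ⬝ᵥ u`, applied to `c` and `A⁻¹ *ᵥ x`.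
  let := A.toSeminormedAddCommGroup hA.posSemidef
  let := A.toInnerProductSpace hA.posSemidef
  have hx : A *ᵥ (A⁻¹ *ᵥ x) = x := by
    rw [mulVec_mulVec, mul_nonsing_inv _ hA.det_pos.ne'.isUnit, one_mulVec]
  have hcs := real_inner_mul_inner_self_le c (A⁻¹ *ᵥ x)
  change (A *ᵥ (A⁻¹ *ᵥ x)) ⬝ᵥ c * ((A *ᵥ (A⁻¹ *ᵥ x)) ⬝ᵥ c) ≤
    (A *ᵥ c) ⬝ᵥ c * ((A *ᵥ (A⁻¹ *ᵥ x)) ⬝ᵥ (A⁻¹ *ᵥ x)) at hcs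
  rw [hx, dotProduct_comm x c, dotProduct_comm (A *ᵥ c)] at hcs
  rwa [sq, mul_comm (x ⬝ᵥ _)]

end DecidableEq

theorem exists_mem_convexHull_sq_dotProduct_le_add {B : Set (n → ℝ)} (hB : IsCompact B)
    (hne : B.Nonempty) {ε : ℝ} (hε : 0 < ε) :
    ∃ M ∈ convexHull ℝ ((fun x => vecMulVec x x) '' B), ∀ c, ∀ x ∈ B,
      (c ⬝ᵥ x) ^ 2 ≤ Fintype.card n * (ε * (c ⬝ᵥ c) + c ⬝ᵥ M *ᵥ c) := by
  classical
  -- The term `ε • 1` keeps the maximizer positive definite even if `B` spans a proper subspace.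
  set K := convexHull ℝ ((fun x => vecMulVec x x) '' B)
  have hK : IsCompact K := (hB.image (by fun_prop)).convexHull
  have hKne : K.Nonempty := convexHull_nonempty_iff.2 (hne.image _)
  obtain ⟨_, ⟨M, hMK, rfl⟩, hmax⟩ := (hK.image (continuous_const_add (ε • 1))).exists_isMaxOn
    (hKne.image _) continuous_id.matrix_det.continuousOn
  set A := ε • 1 + M
  have hA : A.PosDef := (PosDef.one.smul hε).add_posSemidef
    (posSemidef_of_mem_convexHull_vecMulVec_self hMK)
  refine ⟨M, hMK, fun c x hx => ?_⟩
  have hopt : x ⬝ᵥ A⁻¹ *ᵥ x ≤ Fintype.card n := by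
    have htr : trace (A⁻¹ * (ε • 1 + vecMulVec x x)) ≤ (Fintype.card n : ℝ) :=
      trace_inv_mul_le_card_of_isMaxOn_det ((convex_convexHull ℝ _).translate _)
        ⟨M, hMK, rfl⟩ hA.det_pos hmax ⟨_, subset_convexHull ℝ _ ⟨x, hx, rfl⟩, rfl⟩
    rw [Matrix.mul_add, trace_add, Matrix.mul_smul, trace_smul, Matrix.mul_one, mul_vecMulVec,
      trace_vecMulVec, dotProduct_comm, smul_eq_mul] at htr
    nlinarith [hA.inv.posSemidef.trace_nonneg]
  calc (c ⬝ᵥ x) ^ 2 ≤ (x ⬝ᵥ A⁻¹ *ᵥ x) * (c ⬝ᵥ A *ᵥ c) := hA.sq_dotProduct_le c x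
    _ ≤ Fintype.card n * (c ⬝ᵥ A *ᵥ c) := by
      gcongr
      simpa using hA.posSemidef.dotProduct_mulVec_nonneg c
    _ = Fintype.card n * (ε * (c ⬝ᵥ c) + c ⬝ᵥ M *ᵥ c) := by
      simp [A, add_mulVec, smul_mulVec]

theorem exists_mem_convexHull_sq_dotProduct_le {B : Set (n → ℝ)} (hB : IsCompact B)
    (hne : B.Nonempty) :
    ∃ M ∈ convexHull ℝ ((fun x => vecMulVec x x) '' B), ∀ c, ∀ x ∈ B,
      (c ⬝ᵥ x) ^ 2 ≤ Fintype.card n * (c ⬝ᵥ M *ᵥ c) := by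
  have : FirstCountableTopology (Matrix n n ℝ) :=
    inferInstanceAs (FirstCountableTopology (n → n → ℝ))
  choose M hMK hM using fun k : ℕ =>
    exists_mem_convexHull_sq_dotProduct_le_add hB hne (Nat.one_div_pos_of_nat (n := k))
  obtain ⟨M₀, hM₀K, σ, hσ, hlim⟩ := (hB.image (by fun_prop)).convexHull.tendsto_subseq hMK
  refine ⟨M₀, hM₀K, fun c x hx => ?_⟩
  have hε : Tendsto (fun k => 1 / ((σ k : ℕ) + 1 : ℝ)) atTop (𝓝 0) :=
    tendsto_one_div_add_atTop_nhds_zero_nat.comp hσ.tendsto_atTop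
  have hq : Continuous fun M : Matrix n n ℝ => c ⬝ᵥ M *ᵥ c := by fun_prop
  refine ge_of_tendsto (x := atTop) ?_ (.of_forall fun k => hM (σ k) c x hx)
  simpa using ((hε.mul_const (c ⬝ᵥ c)).add ((hq.tendsto M₀).comp hlim)).const_mul _

theorem exists_finset_card_le_of_mem_convexHull_vecMulVec_self {B : Set (n → ℝ)}
    {M : Matrix n n ℝ} (hM : M ∈ convexHull ℝ ((fun x => vecMulVec x x) '' B)) :
    ∃ X : Finset (n → ℝ), ↑X ⊆ B ∧ X.card ≤ Fintype.card (Sym2 n) + 1 ∧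
      M ∈ convexHull ℝ ((fun x => vecMulVec x x) '' X) := by
  classical
  obtain ⟨t, hts, htcard, hMt⟩ := exists_finset_card_le_finrank_succ_of_mem_convexHull
    (image_subset_iff.2 fun x _ => vecMulVec_self_mem_range_ofSym2 x) hM
  obtain ⟨X, hXB, hinj, rfl⟩ := Finset.exists_subset_injOn_image_eq_of_surjOn B t hts
  refine ⟨X, hXB, ?_, by simpa using hMt⟩
  rw [Finset.card_image_of_injOn hinj] at htcard
  exact htcard.trans (Nat.succ_le_succ ((LinearMap.finrank_range_le _).trans (by simp)))

end Matrix

theorem stmt0 (d : ℕ) (B : Set (Fin d → ℝ)) (hB : IsCompact B) (hne : B.Nonempty) :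
    ∃ X : Finset (Fin d → ℝ), ↑X ⊆ B ∧ X.Nonempty ∧ X.card ≤ 1 + d * (d + 1) / 2 ∧
      ∀ c : Fin d → ℝ, ∀ x ∈ B,
        |∑ i, c i * x i| ≤
          Real.sqrt d * sSup ((fun y => |∑ i, c i * y i|) '' (X : Set (Fin d → ℝ))) := by
  obtain ⟨M, hM, hdesign⟩ := exists_mem_convexHull_sq_dotProduct_le hB hne
  obtain ⟨X, hXB, hXcard, hMX⟩ := exists_finset_card_le_of_mem_convexHull_vecMulVec_self hM
  have hXne : X.Nonempty :=
    Finset.coe_nonempty.1 (image_nonempty.1 (convexHull_nonempty_iff.1 ⟨M, hMX⟩))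
  refine ⟨X, hXB, hXne, ?_, fun c x hx => ?_⟩
  · simpa [Sym2.card, Nat.choose_two_right, add_comm, mul_comm] using hXcard
  set m := sSup ((fun y => |∑ i, c i * y i|) '' (X : Set (Fin d → ℝ)))
  have hm : ∀ y ∈ X, |c ⬝ᵥ y| ≤ m := fun y hy =>
    le_csSup (X.finite_toSet.image _).bddAbove ⟨y, hy, rfl⟩
  have hm₀ : 0 ≤ m := (abs_nonneg _).trans (hm _ hXne.choose_spec)
  have hq : c ⬝ᵥ M *ᵥ c ≤ m ^ 2 := dotProduct_mulVec_le_of_mem_convexHull_vecMulVec_self hMX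
    fun y hy => sq_le_sq' (abs_le.1 (hm y hy)).1 (abs_le.1 (hm y hy)).2
  calc |c ⬝ᵥ x| = √((c ⬝ᵥ x) ^ 2) := (Real.sqrt_sq_eq_abs _).symm
    _ ≤ √(d * m ^ 2) := Real.sqrt_le_sqrt <| (hdesign c x hx).trans <| by
      rw [Fintype.card_fin]; gcongr
    _ = √d * m := by rw [Real.sqrt_mul d.cast_nonneg, Real.sqrt_sq hm₀]
end

section
/- Let E be the (unique) minimum-volume ellipsoid centered at the origin containing a compact set B that spans ℝ^d, and suppose after a linear change of coordinates E is the unit ball. Then there exist a finite set X ⊆ B and nonnegative reals α_x for x ∈ X with Σ_{x∈X} α_x · x x^T = (1/d)·I and Σ_{x∈X} α_x = 1. -/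
/-!
Suppose `I / d` is not a convex combination of the matrices `x xᵀ`, `x ∈ B`. These matrices form a
compact set, so a linear functional separates `I / d` from their convex hull; restricted to
symmetric matrices it is `A ↦ tr (H A)` for a symmetric `H`, which gives `xᵀ H x < u` on `B` and
`d u < tr H`. For small `t > 0` the ellipsoid `{x : xᵀ (I + t H) x ≤ 1 + t u}` then contains `B`,
while `det (I + t H) = 1 + t tr H + O(t²)` exceeds `(1 + t u)ᵈ`, so this ellipsoid has smaller
volume than the unit ball.
-/

open Matrix Finset Filter Topology

theorem isCompact_convexHull {E : Type*} [AddCommGroup E] [Module ℝ E] [TopologicalSpace E]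
    [ContinuousAdd E] [ContinuousSMul ℝ E] [FiniteDimensional ℝ E] {s : Set E}
    (hs : IsCompact s) : IsCompact (convexHull ℝ s) := by
  let combo (k : ℕ) (p : (Fin k → ℝ) × (Fin k → E)) : E := ∑ i, p.1 i • p.2 i
  -- Carathéodory: at most `finrank + 1` points are needed.
  have hcover : convexHull ℝ s = ⋃ k ∈ range (Module.finrank ℝ E + 2),
      combo k '' (stdSimplex ℝ (Fin k) ×ˢ Set.univ.pi fun _ => s) := by
    refine subset_antisymm (fun x hx => ?_) ?_
    · obtain ⟨ι, _, z, w, hzs, hz, hw0, hw1, rfl⟩ := eq_pos_convex_span_of_mem_convexHull hx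
      have hcard : Fintype.card ι < Module.finrank ℝ E + 2 := by
        have := hz.card_le_finrank_succ
        have := Submodule.finrank_le (vectorSpan ℝ (Set.range z))
        omega
      let e := Fintype.equivFin ι
      refine Set.mem_biUnion (mem_range.2 hcard)
        ⟨(w ∘ e.symm, z ∘ e.symm), ⟨⟨fun i => (hw0 _).le, ?_⟩, fun i _ => hzs ⟨_, rfl⟩⟩, ?_⟩
      · exact (e.symm.sum_comp w).trans hw1
      · exact e.symm.sum_comp fun i => w i • z i
    · refine Set.iUnion₂_subset fun k _ => ?_
      rintro - ⟨⟨w, z⟩, ⟨hw, hz⟩, rfl⟩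
      exact (convex_convexHull ℝ s).sum_mem (fun i _ => hw.1 i) hw.2
        fun i _ => subset_convexHull ℝ s (hz i (Set.mem_univ i))
  rw [hcover]
  exact (range _).isCompact_biUnion fun k _ =>
    ((isCompact_stdSimplex ℝ (Fin k)).prod (isCompact_univ_pi fun _ => hs)).image (by fun_prop)

theorem exists_finset_of_mem_convexHull_image {α E : Type*} [AddCommGroup E] [Module ℝ E]
    {f : α → E} {s : Set α} {z : E} (hz : z ∈ convexHull ℝ (f '' s)) :
    ∃ X : Finset α, ↑X ⊆ s ∧ ∃ w : α → ℝ, (∀ x ∈ X, 0 ≤ w x) ∧ ∑ x ∈ X, w x = 1 ∧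
      ∑ x ∈ X, w x • f x = z := by
  classical
  rw [convexHull_eq_union_convexHull_finite_subsets, Set.mem_iUnion₂] at hz
  obtain ⟨T, hTs, hzT⟩ := hz
  obtain ⟨X, hXs, hinj, rfl⟩ := exists_subset_injOn_image_eq_of_surjOn s T hTs
  obtain ⟨w, hw0, hw1, rfl⟩ := Finset.mem_convexHull'.1 hzT
  rw [sum_image hinj] at hw1 ⊢
  exact ⟨X, hXs, w ∘ f, fun x hx => hw0 _ (mem_image_of_mem f hx), hw1, rfl⟩

theorem LinearMap.apply_eq_sum_single {R m n : Type*} [CommSemiring R] [Fintype m] [Fintype n]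
    [DecidableEq m] [DecidableEq n] (ℓ : Matrix m n R →ₗ[R] R) (A : Matrix m n R) :
    ℓ A = ∑ i, ∑ j, A i j * ℓ (Matrix.single i j 1) := by
  conv_lhs => rw [matrix_eq_sum_single A]
  simp only [map_sum]
  refine sum_congr rfl fun i _ => sum_congr rfl fun j _ => ?_
  rw [← smul_eq_mul, ← map_smul, smul_single, smul_eq_mul, mul_one]

namespace LinearMap

variable {n : Type*} [DecidableEq n] (ℓ : Matrix n n ℝ →ₗ[ℝ] ℝ)

/-- The symmetric `H` with `ℓ A = tr (H A)` for every symmetric matrix `A`. -/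
noncomputable def symmetricMatrix : Matrix n n ℝ :=
  of fun i j => (ℓ (Matrix.single i j 1) + ℓ (Matrix.single j i 1)) / 2

theorem isHermitian_symmetricMatrix : ℓ.symmetricMatrix.IsHermitian := by
  ext i j
  simp only [symmetricMatrix, conjTranspose_apply, of_apply, star_trivial, add_comm]

variable [Fintype n]

theorem apply_vecMulVec_self (x : n → ℝ) :
    ℓ (vecMulVec x x) = x ⬝ᵥ ℓ.symmetricMatrix *ᵥ x := by
  have hswap : ∑ i, ∑ j, x i * x j * ℓ (Matrix.single j i 1) =
      ∑ i, ∑ j, x i * x j * ℓ (Matrix.single i j 1) := by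
    rw [sum_comm]
    simp only [mul_comm (x _) (x _)]
  calc ℓ (vecMulVec x x) = ∑ i, ∑ j, x i * x j * ℓ (Matrix.single i j 1) := by
        simp only [apply_eq_sum_single ℓ (vecMulVec x x), vecMulVec_apply]
    _ = (∑ i, ∑ j, x i * x j * ℓ (Matrix.single i j 1) +
          ∑ i, ∑ j, x i * x j * ℓ (Matrix.single j i 1)) / 2 := by
        rw [hswap, add_self_div_two]
    _ = x ⬝ᵥ ℓ.symmetricMatrix *ᵥ x := by
        simp only [dotProduct, mulVec, symmetricMatrix, of_apply, mul_sum, sum_div,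
          ← sum_add_distrib]
        exact sum_congr rfl fun i _ => sum_congr rfl fun j _ => by ring

theorem apply_one : ℓ 1 = Matrix.trace ℓ.symmetricMatrix := by
  rw [apply_eq_sum_single]
  simp [one_apply, Matrix.trace, symmetricMatrix]

end LinearMap

theorem HasDerivAt.eventually_gt_right {f : ℝ → ℝ} {f' x : ℝ} (hf : HasDerivAt f f' x)
    (hf' : 0 < f') : ∀ᶠ y in 𝓝[>] x, f x < f y := by
  have hslope : ∀ᶠ y in 𝓝[>] x, 0 < slope f x y :=
    ((hasDerivAt_iff_tendsto_slope.1 hf).mono_left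
      (nhdsWithin_mono x fun y hy => ne_of_gt hy)).eventually_const_lt hf'
  filter_upwards [hslope, self_mem_nhdsWithin] with y hy hxy
  exact (slope_pos_iff hxy).1 hy

theorem hasDerivAt_det_one_add_smul {𝕜 n : Type*} [NontriviallyNormedField 𝕜] [Fintype n]
    [DecidableEq n] (H : Matrix n n 𝕜) :
    HasDerivAt (fun t : 𝕜 => det (1 + t • H)) (trace H) 0 := by
  have := (det (1 + (Polynomial.X : Polynomial 𝕜) • H.map Polynomial.C)).hasDerivAt 0
  rw [derivative_det_one_add_X_smul] at this
  convert this using 2 with t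
  rw [← Polynomial.coe_evalRingHom, RingHom.map_det]
  congr 1
  ext i j
  by_cases h : i = j <;> simp [h, mul_comm t]

section

variable {n : Type*} [Fintype n]

theorem abs_dotProduct_mulVec_self_le (H : Matrix n n ℝ) (x : n → ℝ) :
    |x ⬝ᵥ H *ᵥ x| ≤ (∑ i, ∑ j, |H i j|) * (x ⬝ᵥ x) := by
  have hcoord (i j : n) : |x i * x j| ≤ x ⬝ᵥ x := by
    have hi : x i * x i ≤ x ⬝ᵥ x := single_le_sum (fun k _ => mul_self_nonneg (x k)) (mem_univ i)
    have hj : x j * x j ≤ x ⬝ᵥ x := single_le_sum (fun k _ => mul_self_nonneg (x k)) (mem_univ j)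
    rw [abs_mul]
    nlinarith [abs_mul_abs_self (x i), abs_mul_abs_self (x j), sq_nonneg (|x i| - |x j|)]
  calc |x ⬝ᵥ H *ᵥ x| = |∑ i, ∑ j, H i j * (x i * x j)| := by
        simp only [dotProduct, mulVec, mul_sum]
        exact congrArg _ (sum_congr rfl fun i _ => sum_congr rfl fun j _ => by ring)
    _ ≤ ∑ i, ∑ j, |H i j| * |x i * x j| :=
        (abs_sum_le_sum_abs _ _).trans
          (sum_le_sum fun i _ => (abs_sum_le_sum_abs _ _).trans_eq (by simp only [abs_mul]))
    _ ≤ ∑ i, ∑ j, |H i j| * (x ⬝ᵥ x) :=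
        sum_le_sum fun i _ => sum_le_sum fun j _ =>
          mul_le_mul_of_nonneg_left (hcoord i j) (abs_nonneg _)
    _ = (∑ i, ∑ j, |H i j|) * (x ⬝ᵥ x) := by simp only [sum_mul]

variable [DecidableEq n]

theorem eventually_posDef_one_add_smul {H : Matrix n n ℝ} (hH : H.IsHermitian) :
    ∀ᶠ t in 𝓝 (0 : ℝ), (1 + t • H).PosDef := by
  set C := ∑ i, ∑ j, |H i j|
  have hsmall : ∀ᶠ t in 𝓝 (0 : ℝ), |t| * C < 1 :=
    (Continuous.tendsto' (by fun_prop) 0 0 (by simp)).eventually_lt_const one_pos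
  filter_upwards [hsmall] with t ht
  refine posDef_iff_dotProduct_mulVec.2
    ⟨isHermitian_one.add (hH.smul (IsSelfAdjoint.all t)), fun x hx => ?_⟩
  have hxx : 0 < x ⬝ᵥ x := by simpa using dotProduct_star_self_pos_iff.2 hx
  have hlower : -(|t| * |x ⬝ᵥ H *ᵥ x|) ≤ t * (x ⬝ᵥ H *ᵥ x) := by
    rw [← abs_mul]
    exact neg_abs_le _
  have hupper := mul_le_mul_of_nonneg_left (abs_dotProduct_mulVec_self_le H x) (abs_nonneg t)
  simp only [star_trivial, add_mulVec, one_mulVec, smul_mulVec, dotProduct_add, dotProduct_smul,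
    smul_eq_mul]
  nlinarith

theorem eventually_pow_lt_det_one_add_smul {H : Matrix n n ℝ} {u : ℝ}
    (h : Fintype.card n * u < trace H) :
    ∀ᶠ t in 𝓝[>] 0, (1 + t * u) ^ Fintype.card n < det (1 + t • H) := by
  have hpow : HasDerivAt (fun t : ℝ => (1 + t * u) ^ Fintype.card n) (Fintype.card n * u) 0 := by
    simpa using (((hasDerivAt_id (0 : ℝ)).mul_const u).const_add 1).fun_pow (Fintype.card n)
  filter_upwards [((hasDerivAt_det_one_add_smul H).sub hpow).eventually_gt_right
    (sub_pos.2 h)] with t ht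
  simpa using ht

end

theorem inv_card_smul_one_mem_convexHull_vecMulVec {n : Type*} [Fintype n] [DecidableEq n]
    [Nonempty n] {B : Set (n → ℝ)} (hB : IsCompact B) (hball : ∀ x ∈ B, x ⬝ᵥ x ≤ 1)
    (hmin : ∀ Q : Matrix n n ℝ, Q.PosDef → (∀ x ∈ B, x ⬝ᵥ Q *ᵥ x ≤ 1) → Q.det ≤ 1) :
    (Fintype.card n : ℝ)⁻¹ • (1 : Matrix n n ℝ) ∈ convexHull ℝ ((fun x => vecMulVec x x) '' B) := by
  have : LocallyConvexSpace ℝ (Matrix n n ℝ) :=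
    inferInstanceAs (LocallyConvexSpace ℝ (n → n → ℝ))
  by_contra hnot
  obtain ⟨ℓ, u, hℓB, hℓ1⟩ := geometric_hahn_banach_closed_point (convex_convexHull ℝ _)
    (isCompact_convexHull (hB.image (by fun_prop))).isClosed hnot
  set H := (ℓ : Matrix n n ℝ →ₗ[ℝ] ℝ).symmetricMatrix
  have hH : H.IsHermitian := LinearMap.isHermitian_symmetricMatrix _
  have hq (x) (hx : x ∈ B) : x ⬝ᵥ H *ᵥ x < u := by
    rw [← LinearMap.apply_vecMulVec_self]
    exact hℓB _ (subset_convexHull ℝ _ ⟨x, hx, rfl⟩)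
  have htr : Fintype.card n * u < trace H := by
    rw [← LinearMap.apply_one, ContinuousLinearMap.coe_coe]
    rw [map_smul, smul_eq_mul, inv_mul_eq_div, lt_div_iff₀ (by positivity)] at hℓ1
    linarith
  have hgood : ∀ᶠ t in 𝓝[>] 0, 0 < t ∧ (1 + t • H).PosDef ∧ 0 < 1 + t * u ∧
      (1 + t * u) ^ Fintype.card n < det (1 + t • H) := by
    filter_upwards [self_mem_nhdsWithin,
      nhdsWithin_le_nhds (eventually_posDef_one_add_smul hH),
      nhdsWithin_le_nhds ((Continuous.tendsto' (f := fun t : ℝ => 1 + t * u) (by fun_prop) 0 1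
        (by simp)).eventually_const_lt one_pos),
      eventually_pow_lt_det_one_add_smul htr] with t ht hpd hu hdet
    exact ⟨ht, hpd, hu, hdet⟩
  obtain ⟨t, ht, hpd, hu, hdet⟩ := hgood.exists
  refine (hmin ((1 + t * u)⁻¹ • (1 + t • H)) (hpd.smul (inv_pos.2 hu)) fun x hx => ?_).not_gt ?_
  · have hxH := hq x hx
    have hxx := hball x hx
    rw [smul_mulVec, dotProduct_smul, smul_eq_mul, inv_mul_le_iff₀ hu, mul_one, add_mulVec,
      one_mulVec, smul_mulVec, dotProduct_add, dotProduct_smul, smul_eq_mul]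
    nlinarith
  · rw [det_smul, inv_pow, ← div_eq_inv_mul, one_lt_div (by positivity)]
    exact hdet

theorem stmt2_general (d : ℕ) (hd : 0 < d) (B : Set (Fin d → ℝ)) (hB : IsCompact B)
    (hball : ∀ x ∈ B, ∑ i, x i ^ 2 ≤ 1)
    (hmin : ∀ Q : Matrix (Fin d) (Fin d) ℝ, Q.PosDef →
      (∀ x ∈ B, dotProduct x (Q.mulVec x) ≤ 1) → Q.det ≤ 1) :
    ∃ X : Finset (Fin d → ℝ), ↑X ⊆ B ∧
      ∃ α : (Fin d → ℝ) → ℝ, (∀ x ∈ X, 0 ≤ α x) ∧ (∑ x ∈ X, α x = 1) ∧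
        (∑ x ∈ X, α x • Matrix.vecMulVec x x) =
          ((1 : ℝ) / d) • (1 : Matrix (Fin d) (Fin d) ℝ) := by
  have : Nonempty (Fin d) := ⟨⟨0, hd⟩⟩
  have hmem := inv_card_smul_one_mem_convexHull_vecMulVec hB
    (fun x hx => by simpa [dotProduct, sq] using hball x hx) hmin
  rw [Fintype.card_fin, ← one_div] at hmem
  exact exists_finset_of_mem_convexHull_image hmem

theorem stmt2 (d : ℕ) (hd : 0 < d) (B : Set (Fin d → ℝ)) (hB : IsCompact B)
    (hspan : Submodule.span ℝ B = ⊤)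
    (hball : ∀ x ∈ B, ∑ i, x i ^ 2 ≤ 1)
    (hmin : ∀ Q : Matrix (Fin d) (Fin d) ℝ, Q.PosDef →
      (∀ x ∈ B, dotProduct x (Q.mulVec x) ≤ 1) → Q.det ≤ 1) :
    ∃ X : Finset (Fin d → ℝ), ↑X ⊆ B ∧
      ∃ α : (Fin d → ℝ) → ℝ, (∀ x ∈ X, 0 ≤ α x) ∧ (∑ x ∈ X, α x = 1) ∧
        (∑ x ∈ X, α x • Matrix.vecMulVec x x) =
          ((1 : ℝ) / d) • (1 : Matrix (Fin d) (Fin d) ℝ) :=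
  stmt2_general d hd B hB hball hmin
end

section
/- Let I, J be index sets, and let (u_i)_{i∈I}, (v_j)_{j∈J} be vectors in ℝ^d with ⟨u_i, v_j⟩ ≤ 1 for all i, j, and span(v_j : j ∈ J) = ℝ^d. Suppose there exist r×r symmetric positive semidefinite matrices U_i (i ∈ I) and V_j (j ∈ J) with 1 − ⟨u_i, v_j⟩ = ⟨U_i, V_j⟩ for all i, j, where ⟨·,·⟩ on matrices is the trace inner product. Then there exists a convex set C ⊆ ℝ^d which is the image under an affine map of the intersection of an affine subspace of r×r symmetric matrices with the PSD cone, such that u_i ∈ C for all i ∈ I and ⟨x, v_j⟩ ≤ 1 for all x ∈ C and all j ∈ J. -/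
/-!
Let `ev x := (⟨x, v_j⟩)_j`, injective because the `v_j` span, and `g M := (1 - ⟨M, V_j⟩)_j`, an affine
map on matrices. On the affine subspace `A := g⁻¹(range ev)` the map `g` lifts through `ev` to an
affine map `T`, and `C := T (A ∩ PSD)` works: `g (U_i) = ev (u_i)` by the factorization, so
`T (U_i) = u_i`; and for `M ∈ A ∩ PSD`, `⟨T M, v_j⟩ = 1 - ⟨M, V_j⟩ ≤ 1` because the trace pairing of
two PSD matrices is nonnegative.
-/

open Matrix

open scoped ComplexOrder in
theorem Matrix.PosSemidef.sum_hadamard_nonneg {n 𝕜 : Type*} [Fintype n] [RCLike 𝕜]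
    {M N : Matrix n n 𝕜} (hM : M.PosSemidef) (hN : N.PosSemidef) :
    0 ≤ ∑ a, ∑ b, M a b * N a b := by
  -- Schur product theorem, tested against the all-ones vector
  simpa [dotProduct, mulVec] using (hM.hadamard hN).dotProduct_mulVec_nonneg 1

theorem Matrix.convex_setOf_posSemidef_s6 {n : Type*} [Fintype n] :
    Convex ℝ {M : Matrix n n ℝ | M.PosSemidef} :=
  fun _ hM _ hN _ _ ha hb _ => (hM.smul ha).add (hN.smul hb)

theorem Matrix.injective_vecMul_transpose_of_span_eq_top {R n J : Type*} [Field R] [LinearOrder R]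
    [IsStrictOrderedRing R] [Fintype n] {v : J → n → R}
    (hv : Submodule.span R (Set.range v) = ⊤) :
    Function.Injective fun x : n → R => x ᵥ* (of v)ᵀ := by
  intro x y hxy
  have hvanish : dotProductBilin R R (x - y) = 0 :=
    LinearMap.ext_on_range hv fun j => by
      simpa [vecMul_transpose, mulVec, dotProduct_comm, sub_dotProduct, sub_eq_zero]
        using congrFun hxy j
  exact sub_eq_zero.mp (dotProduct_self_eq_zero.mp (LinearMap.congr_fun hvanish (x - y)))

theorem LinearMap.exists_affineMap_comp_eq_on_comap_range {K E F G : Type*} [Field K]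
    [AddCommGroup E] [Module K E] [AddCommGroup F] [Module K F] [AddCommGroup G] [Module K G]
    (f : F →ₗ[K] G) (hf : Function.Injective f) (g : E →ᵃ[K] G) :
    ∃ T : E →ᵃ[K] F, ∀ M ∈ (LinearMap.range f).toAffineSubspace.comap g, f (T M) = g M := by
  obtain ⟨P, hP⟩ := f.exists_leftInverse_of_injective (LinearMap.ker_eq_bot.mpr hf)
  refine ⟨P.toAffineMap.comp g, fun M ⟨x, hx⟩ => ?_⟩
  simp [← hx, ← LinearMap.comp_apply P f, hP]

theorem stmt6_general {d r : ℕ} {I J : Type*} (u : I → (Fin d → ℝ)) (v : J → (Fin d → ℝ))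
    (hspan : Submodule.span ℝ (Set.range v) = ⊤)
    (U : I → Matrix (Fin r) (Fin r) ℝ) (V : J → Matrix (Fin r) (Fin r) ℝ)
    (hU : ∀ i, (U i).PosSemidef) (hV : ∀ j, (V j).PosSemidef)
    (hfac : ∀ i j, 1 - ∑ t, u i t * v j t = ∑ a, ∑ b, U i a b * V j a b) :
    ∃ C : Set (Fin d → ℝ), Convex ℝ C ∧
      (∃ (A : AffineSubspace ℝ (Matrix (Fin r) (Fin r) ℝ))
         (T : Matrix (Fin r) (Fin r) ℝ →ᵃ[ℝ] (Fin d → ℝ)),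
         C = T '' ((A : Set (Matrix (Fin r) (Fin r) ℝ)) ∩ {M | M.PosSemidef})) ∧
      (∀ i, u i ∈ C) ∧ (∀ x ∈ C, ∀ j, ∑ t, x t * v j t ≤ 1) := by
  set ev := (of v)ᵀ.vecMulLinear
  have hev : Function.Injective ev := injective_vecMul_transpose_of_span_eq_top hspan
  -- `trace (M * Nᵀ)` unfolds to `∑ a, ∑ b, M a b * N a b` by definition (`Matrix.sum_hadamard_eq`)
  let g : Matrix (Fin r) (Fin r) ℝ →ᵃ[ℝ] (J → ℝ) := AffineMap.const ℝ _ 1 -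
    (LinearMap.pi fun j => traceLinearMap (Fin r) ℝ ℝ ∘ₗ LinearMap.mulRight ℝ (V j)ᵀ).toAffineMap
  set A := (LinearMap.range ev).toAffineSubspace.comap g
  obtain ⟨T, hT⟩ := ev.exists_affineMap_comp_eq_on_comap_range hev g
  have hUA : ∀ i, ev (u i) = g (U i) := fun i => funext fun j => by
    change ∑ t, u i t * v j t = 1 - ∑ a, ∑ b, U i a b * V j a b
    linarith [hfac i j]
  have hUA_mem : ∀ i, U i ∈ A := fun i => ⟨u i, hUA i⟩
  refine ⟨T '' (A ∩ {M | M.PosSemidef}), (A.convex.inter convex_setOf_posSemidef_s6).affine_image T,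
    ⟨A, T, rfl⟩, fun i => ⟨U i, ⟨hUA_mem i, hU i⟩, hev ((hT _ (hUA_mem i)).trans (hUA i).symm)⟩, ?_⟩
  rintro _ ⟨M, ⟨hMA, hM⟩, rfl⟩ j
  have hTM : ∑ t, T M t * v j t = 1 - ∑ a, ∑ b, M a b * V j a b := congrFun (hT M hMA) j
  linarith [hM.sum_hadamard_nonneg (hV j)]

theorem stmt6 {d r : ℕ} {I J : Type*} (u : I → (Fin d → ℝ)) (v : J → (Fin d → ℝ))
    (h1 : ∀ i j, ∑ t, u i t * v j t ≤ 1)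
    (hspan : Submodule.span ℝ (Set.range v) = ⊤)
    (U : I → Matrix (Fin r) (Fin r) ℝ) (V : J → Matrix (Fin r) (Fin r) ℝ)
    (hU : ∀ i, (U i).PosSemidef) (hV : ∀ j, (V j).PosSemidef)
    (hfac : ∀ i j, 1 - ∑ t, u i t * v j t = ∑ a, ∑ b, U i a b * V j a b) :
    ∃ C : Set (Fin d → ℝ), Convex ℝ C ∧
      (∃ (A : AffineSubspace ℝ (Matrix (Fin r) (Fin r) ℝ))
         (T : Matrix (Fin r) (Fin r) ℝ →ᵃ[ℝ] (Fin d → ℝ)),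
         C = T '' ((A : Set (Matrix (Fin r) (Fin r) ℝ)) ∩ {M | M.PosSemidef})) ∧
      (∀ i, u i ∈ C) ∧ (∀ x ∈ C, ∀ j, ∑ t, x t * v j t ≤ 1) :=
  stmt6_general u v hspan U V hU hV hfac
end

section
/- Let A = (a_{ij}), i ∈ I, j ∈ J, be a real matrix with rank A ≤ n (i.e., a_{ij} = ⟨u_i, v_j⟩ for some u_i, v_j ∈ ℝ^n), and let p be a real polynomial of degree at most k. Define B = (b_{ij}) by b_{ij} = p(a_{ij}). Then rank B ≤ C(n + k, k). -/
open Finset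

lemma card_piAntidiag_univ_fin (m k : ℕ) :
    (Finset.piAntidiag (Finset.univ : Finset (Fin m)) k).card = (m + k - 1).choose k := by
  classical
  rw [← Finset.map_sym_eq_piAntidiag, Finset.card_map, Finset.sym_univ,
    ← Fintype.card_coe, Fintype.card_coe]
  have := Sym.card_sym_eq_choose (α := Fin m) k
  simpa using this

theorem stmt9 {I J : Type*} (n k : ℕ) (a : I → J → ℝ)
    (u : I → Fin n → ℝ) (v : J → Fin n → ℝ)
    (ha : ∀ i j, a i j = ∑ t, u i t * v j t)
    (p : Polynomial ℝ) (hp : p.natDegree ≤ k) :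
    ∃ (U : I → Fin ((n + k).choose k) → ℝ) (V : J → Fin ((n + k).choose k) → ℝ),
      ∀ i j, p.eval (a i j) = ∑ t, U i t * V j t := by
  classical
  set N := (n + k).choose k with hN
  set T : Finset (Fin (n + 1) → ℕ) := Finset.piAntidiag Finset.univ k with hT
  have hcardT : T.card = N := by
    rw [hT, card_piAntidiag_univ_fin, hN]
    congr 1
    omega
  have hcard : Fintype.card {g // g ∈ T} = N := by
    rw [Fintype.card_coe, hcardT]
  let e : {g // g ∈ T} ≃ Fin N := Fintype.equivFinOfCardEq hcard
  -- the row/column vectors indexed by T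
  let U' : I → (Fin (n + 1) → ℕ) → ℝ := fun i g =>
    p.coeff (∑ t : Fin n, g t.castSucc) *
      (Nat.multinomial Finset.univ (fun t : Fin n => g t.castSucc) : ℝ) *
      ∏ t : Fin n, (u i t) ^ (g t.castSucc)
  let V' : J → (Fin (n + 1) → ℕ) → ℝ := fun j g => ∏ t : Fin n, (v j t) ^ (g t.castSucc)
  refine ⟨fun i t => U' i (e.symm t).1, fun j t => V' j (e.symm t).1, fun i j => ?_⟩
  have key : p.eval (a i j) = ∑ g ∈ T, U' i g * V' j g := by
    rw [ha, Polynomial.eval_eq_sum_range' (Nat.lt_succ_of_le hp)]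
    have expand : ∀ d : ℕ, (∑ t : Fin n, u i t * v j t) ^ d =
        ∑ f ∈ Finset.piAntidiag (Finset.univ : Finset (Fin n)) d,
          (Nat.multinomial Finset.univ f : ℝ) *
            ((∏ t : Fin n, (u i t) ^ f t) * (∏ t : Fin n, (v j t) ^ f t)) := by
      intro d
      rw [Finset.sum_pow_eq_sum_piAntidiag]
      refine Finset.sum_congr rfl fun f _ => ?_
      rw [← Finset.prod_mul_distrib]
      simp_rw [mul_pow]
    simp_rw [expand, Finset.mul_sum]
    rw [Finset.sum_sigma']
    refine Finset.sum_nbij' (i := fun x => Fin.snoc x.2 (k - x.1))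
      (j := fun g => ⟨∑ t : Fin n, g t.castSucc, fun t => g t.castSucc⟩) ?_ ?_ ?_ ?_ ?_
    · rintro ⟨d, f⟩ hx
      simp only [Finset.mem_sigma, Finset.mem_range, Finset.mem_piAntidiag] at hx
      obtain ⟨hd, hf, -⟩ := hx
      simp only [hT, Finset.mem_piAntidiag]
      constructor
      · rw [Fin.sum_univ_castSucc]
        simp only [Fin.snoc_castSucc, Fin.snoc_last]
        rw [hf]
        omega
      · intro t _; exact Finset.mem_univ t
    · intro g hg
      simp only [hT, Finset.mem_piAntidiag] at hg
      obtain ⟨hg1, -⟩ := hg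
      rw [Fin.sum_univ_castSucc] at hg1
      simp only [Finset.mem_sigma, Finset.mem_range, Finset.mem_piAntidiag]
      exact ⟨by omega, by simp⟩
    · rintro ⟨d, f⟩ hx
      simp only [Finset.mem_sigma, Finset.mem_range, Finset.mem_piAntidiag] at hx
      obtain ⟨hd, hf, -⟩ := hx
      have h1 : ∀ t : Fin n, (Fin.snoc f (k - d) : Fin (n+1) → ℕ) t.castSucc = f t :=
        fun t => Fin.snoc_castSucc _ _ _
      have h2 : (∑ t : Fin n, (Fin.snoc f (k - d) : Fin (n+1) → ℕ) t.castSucc) = d := by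
        simp_rw [h1]; exact hf
      ext : 1
      · exact h2
      · simp only [heq_eq_eq]
        funext t
        exact h1 t
    · intro g hg
      simp only [hT, Finset.mem_piAntidiag] at hg
      obtain ⟨hg1, -⟩ := hg
      rw [Fin.sum_univ_castSucc] at hg1
      funext t
      refine Fin.lastCases ?_ (fun s => ?_) t
      · simp only [Fin.snoc_last]; omega
      · simp [Fin.snoc_castSucc]
    · rintro ⟨d, f⟩ hx
      simp only [U', V']
      have h1 : ∀ t : Fin n, (Fin.snoc f (k - d) : Fin (n+1) → ℕ) t.castSucc = f t :=
        fun t => Fin.snoc_castSucc _ _ _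
      simp only [Finset.mem_sigma, Finset.mem_range, Finset.mem_piAntidiag] at hx
      obtain ⟨hd, hf, -⟩ := hx
      simp_rw [h1, hf]
      ring
  rw [key]
  rw [← Finset.sum_attach T (fun g => U' i g * V' j g)]
  exact Fintype.sum_equiv e.symm _ _ (fun t => rfl) |>.symm
end

section
/- Let A = (a_{ij}), i ∈ I, j ∈ J, be a real matrix, let S = {a_{ij} : i ∈ I, j ∈ J} be the set of distinct entry values, and let φ: S → ℝ be any function. Define B by b_{ij} = φ(a_{ij}). If |S| ≤ k and rank A ≤ n, then rank B ≤ C(n + k − 1, k − 1). -/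
/-!
Lagrange interpolation replaces `φ` on the at most `k` values of `a` by a polynomial `p` of degree
`< k`, so `φ (a i j) = p ⟨u i, v j⟩`. Expanding each power `⟨u i, v j⟩ ^ m` by the multinomial
theorem writes `p ⟨u i, v j⟩` as an inner product of two vectors indexed by the multisets of size
`< k` over `Fin n`, i.e. by the monomials of degree `< k` in `n` variables; there are
`(n + k - 1).choose (k - 1)` of them.
-/

open Finset Polynomial

def symLT (ι : Type*) [Fintype ι] [DecidableEq ι] (k : ℕ) : Finset ((m : ℕ) × Sym ι m) :=
  (range k).sigma fun m => univ.sym m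

theorem card_symLT_le (ι : Type*) [Fintype ι] [DecidableEq ι] (k : ℕ) :
    #(symLT ι k) ≤ (Fintype.card ι + k - 1).choose (k - 1) := by
  cases k with
  | zero => simp [symLT]
  | succ k =>
    refine le_of_eq ?_
    simp only [symLT, card_sigma, sym_univ, card_univ, Sym.card_sym_eq_multichoose,
      Nat.sum_range_multichoose]
    rw [Nat.add_succ_sub_one, ← Nat.choose_symm_add, add_comm, Nat.add_sub_cancel]

theorem inner_pow_eq_sum_sym {ι R : Type*} [Fintype ι] [DecidableEq ι] [CommSemiring R]
    (x y : ι → R) (m : ℕ) :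
    (∑ t, x t * y t) ^ m = ∑ s ∈ univ.sym m,
      (s.val.countPerms : R) * (s.val.map x).prod * (s.val.map y).prod := by
  rw [sum_pow]
  refine sum_congr rfl fun s _ => ?_
  rw [Multiset.prod_map_mul, mul_assoc]

theorem Polynomial.eval_eq_sum_range_of_degree_lt {R : Type*} [Semiring R] {p : R[X]} {k : ℕ}
    (hp : p.degree < k) (x : R) : p.eval x = ∑ m ∈ range k, p.coeff m * x ^ m := by
  by_cases h0 : p = 0
  · simp [h0]
  · exact eval_eq_sum_range' ((natDegree_lt_iff_degree_lt h0).2 hp) x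

theorem eval_inner_eq_sum_symLT {ι R : Type*} [Fintype ι] [DecidableEq ι] [CommSemiring R]
    {p : R[X]} {k : ℕ} (hp : p.degree < k) (x y : ι → R) :
    p.eval (∑ t, x t * y t) = ∑ s ∈ symLT ι k,
      p.coeff s.1 * (s.2.val.countPerms : R) * (s.2.val.map x).prod * (s.2.val.map y).prod := by
  rw [eval_eq_sum_range_of_degree_lt hp, symLT, sum_sigma]
  refine sum_congr rfl fun m _ => ?_
  rw [inner_pow_eq_sum_sym, mul_sum]
  exact sum_congr rfl fun s _ => by ring

theorem exists_sum_mul_eq_sum_fin {I J α R : Type*} [CommSemiring R] {T : Finset α} {N : ℕ}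
    (hT : #T ≤ N) (f : I → α → R) (g : J → α → R) :
    ∃ (U : I → Fin N → R) (V : J → Fin N → R),
      ∀ i j, ∑ x ∈ T, f i x * g j x = ∑ t, U i t * V j t := by
  classical
  let e : T ↪ Fin N := T.equivFin.toEmbedding.trans (Fin.castLEEmb hT)
  refine ⟨fun i => Function.extend e (fun x => f i x) 0,
    fun j => Function.extend e (fun x => g j x) 0, fun i j => ?_⟩
  have hout : ∀ t ∉ univ.map e,
      Function.extend e (fun x => f i x) 0 t * Function.extend e (fun x => g j x) 0 t = 0 := by
    intro t ht
    have hnot : ¬∃ x, e x = t := fun ⟨x, hx⟩ => ht (mem_map.2 ⟨x, mem_univ x, hx⟩)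
    rw [Function.extend_apply' _ _ _ hnot, Pi.zero_apply, zero_mul]
  rw [← sum_subset (subset_univ _) fun t _ ht => hout t ht, sum_map, ← sum_coe_sort T]
  simp only [e.injective.extend_apply]

theorem stmt10_general {I J : Type*} (n k : ℕ) (a : I → J → ℝ) (φ : ℝ → ℝ)
    (S : Finset ℝ) (hS : S.card ≤ k) (hval : ∀ i j, a i j ∈ S)
    (u : I → Fin n → ℝ) (v : J → Fin n → ℝ)
    (ha : ∀ i j, a i j = ∑ t, u i t * v j t) :
    ∃ (U : I → Fin ((n + k - 1).choose (k - 1)) → ℝ)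
      (V : J → Fin ((n + k - 1).choose (k - 1)) → ℝ),
      ∀ i j, φ (a i j) = ∑ t, U i t * V j t := by
  obtain ⟨p, hdeg, hp⟩ : ∃ p : ℝ[X], p.degree < k ∧ ∀ x ∈ S, p.eval x = φ x := by
    have hinj : Set.InjOn id (S : Set ℝ) := Set.injOn_id _
    exact ⟨Lagrange.interpolate S id φ,
      (Lagrange.degree_interpolate_lt φ hinj).trans_le (by exact_mod_cast hS),
      fun x hx => Lagrange.eval_interpolate_at_node φ hinj hx⟩
  obtain ⟨U, V, hUV⟩ := exists_sum_mul_eq_sum_fin (by simpa using card_symLT_le (Fin n) k)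
    (fun i (s : (m : ℕ) × Sym (Fin n) m) =>
      p.coeff s.1 * (s.2.val.countPerms : ℝ) * (s.2.val.map (u i)).prod)
    (fun j (s : (m : ℕ) × Sym (Fin n) m) => (s.2.val.map (v j)).prod)
  refine ⟨U, V, fun i j => ?_⟩
  rw [← hp _ (hval i j), ha, eval_inner_eq_sum_symLT hdeg, hUV]

theorem stmt10 {I J : Type*} (n k : ℕ) (hk : 0 < k) (a : I → J → ℝ) (φ : ℝ → ℝ)
    (S : Finset ℝ) (hS : S.card ≤ k) (hval : ∀ i j, a i j ∈ S)
    (u : I → Fin n → ℝ) (v : J → Fin n → ℝ)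
    (ha : ∀ i j, a i j = ∑ t, u i t * v j t) :
    ∃ (U : I → Fin ((n + k - 1).choose (k - 1)) → ℝ)
      (V : J → Fin ((n + k - 1).choose (k - 1)) → ℝ),
      ∀ i j, φ (a i j) = ∑ t, U i t * V j t :=
  stmt10_general n k a φ S hS hval u v ha
end

section
/- Let A = (a_{ij}) be a real nonnegative matrix (possibly with infinite index sets) such that the number of distinct values among its entries is at most k. Then rank_psd A ≤ C(rank A + k − 1, k − 1). -/
/-!
Interpolate `√·` on the at most `k` values of `A` by a polynomial `f` of degree `< k`, so that
`√(a i j) = f ⟪u i, v j⟫`. Expanding the powers of `⟪u, v⟫` by the multinomial theorem writes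
`f ⟪u, v⟫` as a dot product `⟪φ u, ψ v⟫` of vectors indexed by the monomials of degree `< k` in `n`
variables, of which there are `C(n + k - 1, k - 1)`. Squaring, `a i j = ⟪φ φᵀ, ψ ψᵀ⟫` with
rank-one positive semidefinite matrices.
-/

open Finset Matrix Polynomial

theorem Polynomial.exists_natDegree_le_eval_eq {F : Type*} [Field F] (S : Finset F) (g : F → F) :
    ∃ p : F[X], p.natDegree ≤ #S - 1 ∧ ∀ x ∈ S, p.eval x = g x := by
  classical
  have hinj : Set.InjOn id (S : Set F) := Function.injective_id.injOn
  exact ⟨Lagrange.interpolate S id g,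
    natDegree_le_iff_degree_le.mpr (Lagrange.degree_interpolate_le g hinj),
    fun x hx => Lagrange.eval_interpolate_at_node g hinj hx⟩

/-- A monomial of degree `e ≤ d` in the variables `σ`, as the multiset of its `e` factors. -/
abbrev MonomialIndex (σ : Type*) (d : ℕ) : Type _ := Σ e : Fin (d + 1), Sym σ e

theorem card_monomialIndex (σ : Type*) [Fintype σ] [DecidableEq σ] (d : ℕ) :
    Fintype.card (MonomialIndex σ d) = (d + Fintype.card σ).choose (Fintype.card σ) := by
  simp only [Fintype.card_sigma, Sym.card_sym_eq_multichoose]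
  exact (Fin.sum_univ_eq_sum_range _ _).trans (Nat.sum_range_multichoose d _)

theorem Polynomial.exists_eval_dotProduct_eq_dotProduct {R σ : Type*} [CommSemiring R]
    [Fintype σ] [DecidableEq σ] {f : R[X]} {d : ℕ} (hf : f.natDegree ≤ d) :
    ∃ φ ψ : (σ → R) → MonomialIndex σ d → R, ∀ u v, f.eval (u ⬝ᵥ v) = φ u ⬝ᵥ ψ v := by
  refine ⟨fun u s => f.coeff s.1 * (s.2 : Multiset σ).countPerms * ((s.2 : Multiset σ).map u).prod,
    fun v s => ((s.2 : Multiset σ).map v).prod, fun u v => ?_⟩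
  rw [eval_eq_sum_range' (Nat.lt_succ_of_le hf), ← Fin.sum_univ_eq_sum_range]
  simp only [dotProduct, Fintype.sum_sigma, Finset.sum_pow, sym_univ, Finset.mul_sum,
    Multiset.prod_map_mul, Sym.val_eq_coe]
  exact Fintype.sum_congr _ _ fun e => Fintype.sum_congr _ _ fun s => by ring

theorem Matrix.sum_vecMulVec_self_mul_vecMulVec_self {R m : Type*} [CommSemiring R] [Fintype m]
    (x y : m → R) : ∑ p, ∑ q, vecMulVec x x p q * vecMulVec y y p q = (x ⬝ᵥ y) ^ 2 := by
  simp only [vecMulVec_apply, dotProduct, sq, Finset.sum_mul_sum]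
  exact Fintype.sum_congr _ _ fun p => Fintype.sum_congr _ _ fun q => by ring

theorem stmt11_general {I J : Type*} (n k : ℕ) (a : I → J → ℝ)
    (hnonneg : ∀ i j, 0 ≤ a i j)
    (S : Finset ℝ) (hS : S.card ≤ k) (hval : ∀ i j, a i j ∈ S)
    (u : I → Fin n → ℝ) (v : J → Fin n → ℝ)
    (ha : ∀ i j, a i j = ∑ t, u i t * v j t) :
    ∃ (U : I → Matrix (Fin ((n + k - 1).choose (k - 1))) (Fin ((n + k - 1).choose (k - 1))) ℝ)
      (V : J → Matrix (Fin ((n + k - 1).choose (k - 1))) (Fin ((n + k - 1).choose (k - 1))) ℝ),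
      (∀ i, (U i).PosSemidef) ∧ (∀ j, (V j).PosSemidef) ∧
      ∀ i j, a i j = ∑ p, ∑ q, U i p q * V j p q := by
  obtain ⟨f, hfdeg, hf⟩ := exists_natDegree_le_eval_eq S Real.sqrt
  obtain ⟨φ, ψ, hφψ⟩ :=
    f.exists_eval_dotProduct_eq_dotProduct (σ := Fin n) (hfdeg.trans (Nat.sub_le_sub_right hS 1))
  have e : MonomialIndex (Fin n) (k - 1) ≃ Fin ((n + k - 1).choose (k - 1)) :=
    Fintype.equivFinOfCardEq <| by
      rw [card_monomialIndex, Fintype.card_fin, ← Nat.choose_symm_add]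
      rcases k with _ | k <;> simp [add_comm]
  refine ⟨fun i => vecMulVec (φ (u i) ∘ e.symm) (φ (u i) ∘ e.symm),
    fun j => vecMulVec (ψ (v j) ∘ e.symm) (ψ (v j) ∘ e.symm),
    fun i => posSemidef_vecMulVec_self_star _, fun j => posSemidef_vecMulVec_self_star _,
    fun i j => ?_⟩
  rw [sum_vecMulVec_self_mul_vecMulVec_self, comp_equiv_dotProduct_comp_equiv, ← hφψ,
    ← show a i j = u i ⬝ᵥ v j from ha i j, hf _ (hval i j), Real.sq_sqrt (hnonneg i j)]

theorem stmt11 {I J : Type*} (n k : ℕ) (hk : 0 < k) (a : I → J → ℝ)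
    (hnonneg : ∀ i j, 0 ≤ a i j)
    (S : Finset ℝ) (hS : S.card ≤ k) (hval : ∀ i j, a i j ∈ S)
    (u : I → Fin n → ℝ) (v : J → Fin n → ℝ)
    (ha : ∀ i j, a i j = ∑ t, u i t * v j t) :
    ∃ (U : I → Matrix (Fin ((n + k - 1).choose (k - 1))) (Fin ((n + k - 1).choose (k - 1))) ℝ)
      (V : J → Matrix (Fin ((n + k - 1).choose (k - 1))) (Fin ((n + k - 1).choose (k - 1))) ℝ),
      (∀ i, (U i).PosSemidef) ∧ (∀ j, (V j).PosSemidef) ∧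
      ∀ i j, a i j = ∑ p, ∑ q, U i p q * V j p q :=
  stmt11_general n k a hnonneg S hS hval u v ha
end

section
/- For every ε > 0 there is a positive integer k = k(ε) such that: for any matrix A = (a_{ij}), i ∈ I, j ∈ J, with 0 ≤ a_{ij} ≤ 1 for all i, j and finite rank, there exists a nonnegative matrix A' = (a'_{ij}) with |a_{ij} − a'_{ij}| ≤ ε for all i, j and rank_psd A' ≤ C(k + rank A, k). -/
/-!
Choose a polynomial `p` of degree `k` with `|√t - p t| ≤ ε / 3` on `[0, 1]` and put
`a' i j = (p (a i j))²`; then `|a - a'| = |√a - p a| * |√a + p a| ≤ ε`.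
If `a i j = ⟪u i, v j⟫` with `u i, v j ∈ ℝⁿ`, expanding the powers `⟪u, v⟫ ^ m`, `m ≤ k`, writes
`p ⟪u, v⟫` as a linear combination, with coefficients depending on `u`, of the monomials of degree
at most `k` in the coordinates of `v`. There are `(k + n).choose k` of them, so
`p (a i j) = ⟪X i, Y j⟫` in that dimension, and `(p (a i j))² = tr (X i X iᵀ · Y j Y jᵀ)` is an
inner product of rank-one positive semidefinite matrices.
-/

open Finset Polynomial Matrix

lemma abs_sub_sq_le_of_abs_sqrt_sub_le {a q δ : ℝ} (ha : 0 ≤ a) (ha₁ : a ≤ 1) (hδ : δ ≤ 1)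
    (h : |√a - q| ≤ δ) : |a - q ^ 2| ≤ 3 * δ := by
  have hsqrt : √a ≤ 1 := Real.sqrt_le_one.mpr ha₁
  have hsum : |√a + q| ≤ 3 :=
    calc |√a + q| = |2 * √a - (√a - q)| := by ring_nf
      _ ≤ |2 * √a| + |√a - q| := abs_sub _ _
      _ ≤ 3 := by rw [abs_of_nonneg (by positivity)]; linarith
  calc |a - q ^ 2| = |√a + q| * |√a - q| := by
        rw [← abs_mul, ← sq_sub_sq, Real.sq_sqrt ha]
    _ ≤ 3 * δ := mul_le_mul hsum h (abs_nonneg _) (by norm_num)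

lemma exists_polynomial_sq_near_id {ε : ℝ} (hε : 0 < ε) :
    ∃ p : ℝ[X], ∀ t ∈ Set.Icc (0 : ℝ) 1, |t - p.eval t ^ 2| ≤ ε := by
  obtain ⟨p, hp⟩ := exists_polynomial_near_of_continuousOn 0 1 Real.sqrt
    Real.continuous_sqrt.continuousOn (min (ε / 3) 1) (lt_min (by positivity) one_pos)
  refine ⟨p, fun t ht => ?_⟩
  have hδ : |√t - p.eval t| ≤ min (ε / 3) 1 := by
    rw [abs_sub_comm]
    exact (hp t ht).le
  calc |t - p.eval t ^ 2| ≤ 3 * min (ε / 3) 1 :=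
        abs_sub_sq_le_of_abs_sqrt_sub_le ht.1 ht.2 (min_le_right _ _) hδ
    _ ≤ ε := by linarith [min_le_left (ε / 3) 1]

section MonomialFeatures

variable {R : Type*} [CommSemiring R] {n k : ℕ}

def symOfTuple (t : Σ m : Fin (k + 1), (Fin m → Fin n)) : Sym (Fin (n + 1)) k :=
  ⟨Multiset.replicate (k - t.1) 0 + univ.val.map (Fin.succ ∘ t.2), by
    have := t.1.is_le
    simp only [Multiset.card_add, Multiset.card_replicate, Multiset.card_map, card_val, card_univ,
      Fintype.card_fin]
    omega⟩

/-- The monomials of degree at most `k` in the coordinates of `v`: the index `0` stands for the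
constant `1`. -/
def symMonomial (v : Fin n → R) (σ : Sym (Fin (n + 1)) k) : R :=
  (σ.1.map (Fin.cons 1 v)).prod

lemma symMonomial_symOfTuple (v : Fin n → R) (t : Σ m : Fin (k + 1), (Fin m → Fin n)) :
    symMonomial v (symOfTuple t) = ∏ s, v (t.2 s) := by
  simp only [symMonomial, symOfTuple, Multiset.map_add, Multiset.prod_add, Multiset.map_replicate,
    Multiset.prod_replicate, Multiset.map_map]
  simp [Finset.prod, Function.comp_def]

/-- The coefficient of `symMonomial v σ` in `∑ m ≤ k, c m * ⟪u, v⟫ ^ m`. -/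
def symCoeff (c : ℕ → R) (u : Fin n → R) (σ : Sym (Fin (n + 1)) k) : R :=
  ∑ t with symOfTuple t = σ, c t.1 * ∏ s, u (t.2 s)

lemma sum_mul_dotProduct_pow_eq_dotProduct (c : ℕ → R) (u v : Fin n → R) :
    ∑ m ∈ range (k + 1), c m * (u ⬝ᵥ v) ^ m = symCoeff c u ⬝ᵥ symMonomial (k := k) v := by
  have hfiber (σ : Sym (Fin (n + 1)) k) : symCoeff c u σ * symMonomial v σ
      = ∑ t with symOfTuple t = σ, (c t.1 * ∏ s, u (t.2 s)) * symMonomial v (symOfTuple t) := by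
    rw [symCoeff, sum_mul]
    exact sum_congr rfl fun t ht => by rw [(mem_filter.mp ht).2]
  simp_rw [dotProduct, hfiber]
  rw [sum_fiberwise, ← Fin.sum_univ_eq_sum_range, ← univ_sigma_univ, sum_sigma]
  refine sum_congr rfl fun m _ => ?_
  rw [Fintype.sum_pow, mul_sum]
  refine sum_congr rfl fun f _ => ?_
  rw [symMonomial_symOfTuple v ⟨m, f⟩, prod_mul_distrib, mul_assoc]

lemma card_sym_fin_succ : Fintype.card (Sym (Fin (n + 1)) k) = (k + n).choose k := by
  rw [Sym.card_sym_eq_choose, Fintype.card_fin, Nat.add_right_comm, Nat.add_sub_cancel, add_comm]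

theorem exists_eval_dotProduct_eq_dotProduct (p : R[X]) (hp : p.natDegree ≤ k) (n : ℕ) :
    ∃ X Y : (Fin n → R) → Fin ((k + n).choose k) → R,
      ∀ u v, p.eval (u ⬝ᵥ v) = X u ⬝ᵥ Y v := by
  let e : Sym (Fin (n + 1)) k ≃ Fin ((k + n).choose k) := Fintype.equivFinOfCardEq card_sym_fin_succ
  refine ⟨fun u => symCoeff p.coeff u ∘ e.symm, fun v => symMonomial v ∘ e.symm, fun u v => ?_⟩
  rw [eval_eq_sum_range' (Nat.lt_succ_of_le hp), sum_mul_dotProduct_pow_eq_dotProduct]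
  exact (Equiv.sum_comp e.symm _).symm

end MonomialFeatures

lemma sq_dotProduct_eq_sum_vecMulVec {R ι : Type*} [CommSemiring R] [Fintype ι] (x y : ι → R) :
    (x ⬝ᵥ y) ^ 2 = ∑ p, ∑ q, vecMulVec x x p q * vecMulVec y y p q := by
  rw [sq, dotProduct, sum_mul_sum]
  refine sum_congr rfl fun p _ => sum_congr rfl fun q _ => ?_
  simp only [vecMulVec_apply]
  ring

lemma posSemidef_vecMulVec_self {ι : Type*} [Fintype ι] (x : ι → ℝ) :
    (vecMulVec x x).PosSemidef := by
  simpa using posSemidef_vecMulVec_self_star x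

theorem stmt14 (ε : ℝ) (hε : 0 < ε) :
    ∃ k : ℕ, ∀ (I J : Type) (a : I → J → ℝ),
      (∀ i j, 0 ≤ a i j ∧ a i j ≤ 1) →
      ∀ (n : ℕ) (u : I → Fin n → ℝ) (v : J → Fin n → ℝ),
        (∀ i j, a i j = ∑ t, u i t * v j t) →
        ∃ a' : I → J → ℝ,
          (∀ i j, 0 ≤ a' i j ∧ |a i j - a' i j| ≤ ε) ∧
          ∃ (U : I → Matrix (Fin ((k + n).choose k)) (Fin ((k + n).choose k)) ℝ)
            (V : J → Matrix (Fin ((k + n).choose k)) (Fin ((k + n).choose k)) ℝ),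
            (∀ i, (U i).PosSemidef) ∧ (∀ j, (V j).PosSemidef) ∧
            ∀ i j, a' i j = ∑ p, ∑ q, U i p q * V j p q := by
  obtain ⟨p, hp⟩ := exists_polynomial_sq_near_id hε
  refine ⟨p.natDegree, fun I J a ha n u v hav => ?_⟩
  obtain ⟨X, Y, hXY⟩ := exists_eval_dotProduct_eq_dotProduct p le_rfl n
  refine ⟨fun i j => p.eval (a i j) ^ 2, fun i j => ⟨sq_nonneg _, hp _ (ha i j)⟩,
    fun i => vecMulVec (X (u i)) (X (u i)), fun j => vecMulVec (Y (v j)) (Y (v j)),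
    fun i => posSemidef_vecMulVec_self _, fun j => posSemidef_vecMulVec_self _, fun i j => ?_⟩
  show p.eval (a i j) ^ 2 = _
  rw [← sq_dotProduct_eq_sum_vecMulVec, ← hXY, hav]
  rfl
end
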